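/- Let G = (V, E) be a finite simple graph and D = (V, A) the associated directed graph with the two opposite arcs v→w and w→v for each edge {v,w} ∈ E. In the polynomial ring ℚ[P_a : a ∈ A], the ideal generated by the binomials P^ω − P^{r(ω)}, where ω ranges over ALL closed paths in D, equals the ideal generated by the binomials P^ω − P^{r(ω)}, where ω ranges over the elementary closed paths (cycles) of D only. -/

import Mathlib

/-!
If a closed walk `ω` passes twice through a vertex, cutting it there splits it into two shorter
closed walks `ω₁`, `ω₂` with `P^ω = P^{ω₁} P^{ω₂}` and `P^{r(ω)} = P^{r(ω₁)} P^{r(ω₂)}`, so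
`P^ω - P^{r(ω)} = P^{ω₂} (P^{ω₁} - P^{r(ω₁)}) + P^{r(ω₁)} (P^{ω₂} - P^{r(ω₂)})`.
Induction on the length reduces every closed walk to cycles.

Closed walks are handled as sequences `w : ℕ → V` read up to their length; a closed walk
`ω : Fin (n + 1) → V` corresponds to `k ↦ ω k`.
-/

/-- The arcs of the directed graph `D = (V, A)` associated to a simple graph `G`:
each edge `{v,w}` gives the two arcs `v→w` and `w→v`. -/
abbrev Arc {V : Type*} (G : SimpleGraph V) : Type _ := {p : V × V // G.Adj p.1 p.2}

open Finset MvPolynomial Fin.NatCast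

namespace ClosedWalk

variable {V M R : Type*}

section Prod

variable [CommMonoid M] (f : V → V → M)

def walkProd (w : ℕ → V) (L : ℕ) : M :=
  ∏ k ∈ range L, f (w k) (w (k + 1))

theorem walkProd_add (w : ℕ → V) (a b : ℕ) :
    walkProd f w (a + b) = walkProd f w a * walkProd f (fun k => w (a + k)) b := by
  simp only [walkProd, prod_range_add, add_assoc]

theorem walkProd_congr {w w' : ℕ → V} {L : ℕ} (h : ∀ k ≤ L, w k = w' k) :
    walkProd f w L = walkProd f w' L :=
  prod_congr rfl fun k hk => by
    rw [mem_range] at hk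
    rw [h k hk.le, h (k + 1) hk]

theorem walkProd_natCast {n : ℕ} (ω : Fin (n + 1) → V) :
    walkProd f (fun k : ℕ => ω k) (n + 1) = ∏ i, f (ω i) (ω (i + 1)) := by
  rw [walkProd, ← Fin.prod_univ_eq_prod_range]
  simp only [Nat.cast_add, Nat.cast_one, Fin.cast_val_eq_self]

end Prod

/-- The closed walk `w` with the closed subwalk `w i, …, w (i + d)` cut out. -/
def cutLoop (w : ℕ → V) (i d : ℕ) (k : ℕ) : V :=
  if k < i then w k else w (k + d)

section CutLoop

variable {w : ℕ → V} {i d k : ℕ}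

theorem cutLoop_of_lt (hk : k < i) : cutLoop w i d k = w k := if_pos hk

theorem cutLoop_of_le (hk : i ≤ k) : cutLoop w i d k = w (k + d) := if_neg hk.not_gt

theorem cutLoop_succ_of_lt (hrep : w i = w (i + d)) (hk : k < i) :
    cutLoop w i d (k + 1) = w (k + 1) := by
  rcases (Nat.succ_le_of_lt hk).lt_or_eq with hlt | rfl
  · exact cutLoop_of_lt hlt
  · rw [cutLoop_of_le le_rfl, hrep]

theorem walkProd_cutLoop [CommMonoid M] (f : V → V → M) (hrep : w i = w (i + d)) (c : ℕ) :
    walkProd f (cutLoop w i d) (i + c) =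
      walkProd f w i * walkProd f (fun k => w (i + d + k)) c := by
  rw [walkProd_add]
  congr 1
  · refine prod_congr rfl fun k hk => ?_
    rw [mem_range] at hk
    rw [cutLoop_of_lt hk, cutLoop_succ_of_lt hrep hk]
  · refine prod_congr rfl fun k _ => ?_
    dsimp only
    rw [cutLoop_of_le (by omega), cutLoop_of_le (by omega)]
    congr 2 <;> omega

end CutLoop

/-- `w 0, …, w L` is a closed `r`-walk; the values of `w` beyond `L` play no role. -/
def IsClosedWalk (r : V → V → Prop) (w : ℕ → V) (L : ℕ) : Prop :=
  w L = w 0 ∧ ∀ k < L, r (w k) (w (k + 1))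

section IsClosedWalk

variable {r : V → V → Prop} {w : ℕ → V} {i d c : ℕ}

theorem IsClosedWalk.loop (hw : IsClosedWalk r w (i + d + c)) (hrep : w i = w (i + d)) :
    IsClosedWalk r (fun k => w (i + k)) d :=
  ⟨hrep.symm, fun k hk => hw.2 (i + k) (by omega)⟩

theorem IsClosedWalk.cutLoop (hw : IsClosedWalk r w (i + d + c)) (hrep : w i = w (i + d)) :
    IsClosedWalk r (cutLoop w i d) (i + c) := by
  refine ⟨?_, fun k hk => ?_⟩
  · rw [cutLoop_of_le (by omega), add_right_comm, hw.1]
    rcases i.eq_zero_or_pos with rfl | hi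
    · rw [cutLoop_of_le le_rfl, ← hrep]
    · rw [cutLoop_of_lt hi]
  · rcases lt_or_ge k i with hki | hik
    · rw [cutLoop_of_lt hki, cutLoop_succ_of_lt hrep hki]
      exact hw.2 k (by omega)
    · rw [cutLoop_of_le hik, cutLoop_of_le (by omega), add_right_comm]
      exact hw.2 (k + d) (by omega)

theorem isClosedWalk_natCast {n : ℕ} {ω : Fin (n + 1) → V}
    (h : ∀ i, r (ω i) (ω (i + 1))) : IsClosedWalk r (fun k : ℕ => ω k) (n + 1) := by
  refine ⟨by simp, fun k _ => ?_⟩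
  simpa using h k

theorem IsClosedWalk.exists_fin {n : ℕ}
    (hw : IsClosedWalk r w (n + 1)) (hinj : Set.InjOn w (Set.Iio (n + 1))) :
    ∃ ω : Fin (n + 1) → V, (∀ i, r (ω i) (ω (i + 1))) ∧ Function.Injective ω ∧
      ∀ k ≤ n + 1, ω k = w k := by
  have hext : ∀ k ≤ n + 1, w ((k : Fin (n + 1)) : ℕ) = w k := fun k hk => by
    rw [Fin.val_natCast]
    rcases hk.lt_or_eq with hk | rfl
    · rw [Nat.mod_eq_of_lt hk]
    · rw [Nat.mod_self, hw.1]
  refine ⟨fun i => w i, fun i => ?_, fun i j hij => Fin.ext (hinj i.is_lt j.is_lt hij), hext⟩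
  have hsucc : i + 1 = ((i + 1 : ℕ) : Fin (n + 1)) := by simp
  simpa only [hsucc, hext _ i.is_lt] using hw.2 i i.is_lt

end IsClosedWalk

section Binomial

variable [CommRing R] (f : V → V → R)

/-- `P^ω - P^{r(ω)}` for the closed walk `ω = w 0, …, w L`: reversing the walk is the same as
flipping the arc variables. -/
def walkBinomial (w : ℕ → V) (L : ℕ) : R :=
  walkProd f w L - walkProd (flip f) w L

theorem walkBinomial_congr {w w' : ℕ → V} {L : ℕ} (h : ∀ k ≤ L, w k = w' k) :
    walkBinomial f w L = walkBinomial f w' L := by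
  rw [walkBinomial, walkBinomial, walkProd_congr f h, walkProd_congr (flip f) h]

theorem walkBinomial_mem_of_repeat {I : Ideal R} {w : ℕ → V} {i d c : ℕ}
    (hrep : w i = w (i + d)) (hloop : walkBinomial f (fun k => w (i + k)) d ∈ I)
    (hcut : walkBinomial f (cutLoop w i d) (i + c) ∈ I) :
    walkBinomial f w (i + d + c) ∈ I := by
  have split : ∀ g : V → V → R, walkProd g w (i + d + c) =
      walkProd g (cutLoop w i d) (i + c) * walkProd g (fun k => w (i + k)) d := by
    intro g
    rw [walkProd_add, walkProd_add, walkProd_cutLoop g hrep]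
    simp only [add_assoc]
    ring
  unfold walkBinomial at *
  rw [split f, split (flip f)]
  convert I.add_mem (I.mul_mem_left (walkProd f (cutLoop w i d) (i + c)) hloop)
    (I.mul_mem_left (walkProd (flip f) (fun k => w (i + k)) d) hcut) using 1
  ring

def cycleBinomials (r : V → V → Prop) : Set R :=
  {g | ∃ L w, IsClosedWalk r w L ∧ Set.InjOn w (Set.Iio L) ∧ g = walkBinomial f w L}

theorem exists_repeat_of_not_injOn {w : ℕ → V} {L : ℕ} (h : ¬ Set.InjOn w (Set.Iio L)) :
    ∃ i j, i < j ∧ j < L ∧ w i = w j := by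
  simp only [Set.InjOn, Set.mem_Iio, not_forall] at h
  obtain ⟨i, hi, j, hj, hij, hne⟩ := h
  rcases Nat.lt_or_gt_of_ne hne with hlt | hlt
  exacts [⟨i, j, hlt, hj, hij⟩, ⟨j, i, hlt, hi, hij.symm⟩]

theorem walkBinomial_mem_span_cycleBinomials (r : V → V → Prop) (L : ℕ) (w : ℕ → V)
    (hw : IsClosedWalk r w L) : walkBinomial f w L ∈ Ideal.span (cycleBinomials f r) := by
  induction L using Nat.strong_induction_on generalizing w with
  | _ L ih =>
  by_cases hinj : Set.InjOn w (Set.Iio L)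
  · exact Ideal.subset_span ⟨L, w, hw, hinj, rfl⟩
  obtain ⟨i, j, hij, hjL, hrep⟩ := exists_repeat_of_not_injOn hinj
  obtain ⟨d, rfl⟩ := Nat.exists_eq_add_of_le hij.le
  obtain ⟨c, rfl⟩ := Nat.exists_eq_add_of_le hjL.le
  exact walkBinomial_mem_of_repeat f hrep (ih _ (by omega) _ (hw.loop hrep))
    (ih _ (by omega) _ (hw.cutLoop hrep))

end Binomial

end ClosedWalk

open ClosedWalk

open scoped Classical in
/-- The value `1` at non-adjacent pairs is never used: only arcs of walks are evaluated. -/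
noncomputable def arcVar {V : Type*} (G : SimpleGraph V) (v w : V) : MvPolynomial (Arc G) ℚ :=
  if h : G.Adj v w then X ⟨(v, w), h⟩ else 1

theorem walkBinomial_arcVar {V : Type*} {G : SimpleGraph V} {n : ℕ} (ω : Fin (n + 1) → V)
    (h : ∀ i, G.Adj (ω i) (ω (i + 1))) :
    walkBinomial (arcVar G) (fun k : ℕ => ω k) (n + 1) =
      (∏ i, X (⟨(ω i, ω (i + 1)), h i⟩ : Arc G)) -
        ∏ i, X (⟨(ω (i + 1), ω i), (h i).symm⟩ : Arc G) := by
  simp only [walkBinomial, walkProd_natCast, flip, arcVar, dif_pos (h _), dif_pos (h _).symm]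

theorem stmt_8 {V : Type*}
    (G : SimpleGraph V) :
    Ideal.span {f : MvPolynomial (Arc G) ℚ |
      ∃ (n : ℕ) (ω : Fin (n + 1) → V) (h : ∀ i, G.Adj (ω i) (ω (i + 1))),
        f = (∏ i, MvPolynomial.X (⟨(ω i, ω (i + 1)), h i⟩ : Arc G))
          - ∏ i, MvPolynomial.X (⟨(ω (i + 1), ω i), (h i).symm⟩ : Arc G)} =
    Ideal.span {f : MvPolynomial (Arc G) ℚ |
      ∃ (n : ℕ) (ω : Fin (n + 1) → V) (h : ∀ i, G.Adj (ω i) (ω (i + 1))),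
        Function.Injective ω ∧
        f = (∏ i, MvPolynomial.X (⟨(ω i, ω (i + 1)), h i⟩ : Arc G))
          - ∏ i, MvPolynomial.X (⟨(ω (i + 1), ω i), (h i).symm⟩ : Arc G)} := by
  apply le_antisymm
  · rw [Ideal.span_le]
    rintro _ ⟨n, ω, h, rfl⟩
    rw [← walkBinomial_arcVar ω h]
    refine Ideal.span_le.2 ?_
      (walkBinomial_mem_span_cycleBinomials _ G.Adj _ _ (isClosedWalk_natCast h))
    rintro _ ⟨_ | n, w, hw, hinj, rfl⟩
    · simp [walkBinomial, walkProd]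
    · obtain ⟨ω, hadj, hinj, hext⟩ := IsClosedWalk.exists_fin hw hinj
      refine Ideal.subset_span ⟨n, ω, hadj, hinj, ?_⟩
      rw [← walkBinomial_arcVar, walkBinomial_congr _ hext]
  · exact Ideal.span_mono fun f ⟨n, ω, h, _, hf⟩ => ⟨n, ω, h, hf⟩
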